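/- Let K be a field, S = K[x,y,z,w], and I ⊆ S a monomial ideal such that Ass(S/I) = {(x,y), (x,z), (x,w)}. Then S/I is clean. -/

import Mathlib

open MvPolynomial

/-- The depth of an `S`-module `M` with respect to an ideal `m`: the supremum of
lengths of `M`-regular sequences consisting of elements of `m`. -/
noncomputable def mDepth (S : Type*) [CommRing S] (m : Ideal S)
    (M : Type*) [AddCommGroup M] [Module S M] : ℕ∞ :=
  sSup {n : ℕ∞ | ∃ rs : List S, (rs.length : ℕ∞) = n ∧ (∀ r ∈ rs, r ∈ m) ∧
    RingTheory.Sequence.IsRegular M rs}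

/-- `M` is a Cohen–Macaulay `S`-module (w.r.t. the ideal `m`) if its depth with
respect to `m` equals its Krull dimension, i.e. the Krull dimension of `S ⧸ ann M`. -/
def IsCM (S : Type*) [CommRing S] (m : Ideal S)
    (M : Type*) [AddCommGroup M] [Module S M] : Prop :=
  (mDepth S m M : WithBot ℕ∞) = ringKrullDim (S ⧸ Module.annihilator S M)

/-- `F` is a prime filtration `I = F₀ ⊆ F₁ ⊆ ... ⊆ F_r = S` with
`F_i/F_{i-1} ≅ S/P_i` for prime ideals `P_i`. -/
def IsPrimeFiltration {S : Type*} [CommRing S] (I : Ideal S) (r : ℕ)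
    (F : Fin (r + 1) → Ideal S) (P : Fin r → Ideal S) : Prop :=
  F 0 = I ∧ F (Fin.last r) = ⊤ ∧ (∀ i : Fin r, F i.castSucc ≤ F i.succ) ∧
  ∀ i : Fin r, (P i).IsPrime ∧
    Nonempty ((↥(Submodule.map (F i.castSucc).mkQ (F i.succ))) ≃ₗ[S] (S ⧸ P i))

/-- `S/I` is clean: it has a prime filtration all of whose primes are minimal
primes of `I`. -/
def IsClean {S : Type*} [CommRing S] (I : Ideal S) : Prop :=
  ∃ (r : ℕ) (F : Fin (r + 1) → Ideal S) (P : Fin r → Ideal S),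
    IsPrimeFiltration I r F P ∧ ∀ i, P i ∈ I.minimalPrimes

/-- `S/I` is pretty clean: it has a prime filtration such that `i ≤ j` and
`P i ⊆ P j` imply `P i = P j`. -/
def IsPrettyClean {S : Type*} [CommRing S] (I : Ideal S) : Prop :=
  ∃ (r : ℕ) (F : Fin (r + 1) → Ideal S) (P : Fin r → Ideal S),
    IsPrimeFiltration I r F P ∧ ∀ i j : Fin r, i ≤ j → P i ≤ P j → P i = P j

/-- A (finitely generated) `S`-module `M` is clean: it has a filtration
`0 = M₀ ⊆ M₁ ⊆ ... ⊆ M_r = M` with `M_i/M_{i-1} ≅ S/P_i` where each `P_i` is a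
minimal prime of the support of `M`, i.e. a minimal prime over `ann M`. -/
def IsCleanModule (S : Type*) [CommRing S] (M : Type*) [AddCommGroup M] [Module S M] : Prop :=
  ∃ (r : ℕ) (F : Fin (r + 1) → Submodule S M) (P : Fin r → Ideal S),
    F 0 = ⊥ ∧ F (Fin.last r) = ⊤ ∧ (∀ i : Fin r, F i.castSucc ≤ F i.succ) ∧
    (∀ i : Fin r, (P i).IsPrime ∧
      Nonempty ((↥(F i.succ) ⧸ (Submodule.comap (F i.succ).subtype (F i.castSucc)))
        ≃ₗ[S] (S ⧸ P i))) ∧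
    ∀ i, P i ∈ (Module.annihilator S M).minimalPrimes

/-- An ideal of a polynomial ring is a monomial ideal if it is generated by monomials. -/
def IsMonomialIdeal {σ K : Type*} [CommSemiring K] (I : Ideal (MvPolynomial σ K)) : Prop :=
  ∃ G : Set (MvPolynomial σ K),
    (∀ g ∈ G, ∃ e : σ →₀ ℕ, g = MvPolynomial.monomial e 1) ∧ I = Ideal.span G

/-- The height of an ideal: the infimum of the heights of the primes containing it. -/
noncomputable def idealHeight {S : Type*} [CommRing S] (I : Ideal S) : ℕ∞ :=
  sInf {n : ℕ∞ | ∃ q : PrimeSpectrum S, I ≤ q.asIdeal ∧ Order.height q = n}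

variable {K : Type*} [Field K]

local notation "S" => MvPolynomial (Fin 4) K
local notation "m4" => (Ideal.span {(X 0 : MvPolynomial (Fin 4) K), X 1, X 2, X 3})

/-!
Write `x = X o`. Every associated prime `(x, X k)` contains `x`, so `x ∈ √I`; and some monomial
of `I` is not divisible by `x`, since otherwise a minimal prime of `I` would lie in `(x)`. A
monomial `m` lies in `I` as soon as, for each associated prime `(x, X k)`, some `r ∉ (x, X k)` has
`r * m ∈ I`. Consequently `x ^ a * ∏ X k ^ b k ∈ I` iff `t k a ≤ b k` for all `k`, where the
threshold `t k` is read off from the projection of the exponents of `I` to the `(x, X k)`-plane;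
each `t k` is antitone and vanishes for large `a`.

For such a staircase ideal `J`, lowering `t k a` by one where `t k (a + 1) < t k a` adjoins a single
monomial `u` to `J`, and `J : u = (x, X k)`. Since the ring is Noetherian, repeating this reaches
the unit ideal, and the resulting filtration has only the primes `(x, X k)`, which are pairwise
incomparable and hence all minimal over `I`.
-/

section PrimeFiltration

variable {R : Type*} [CommRing R]

lemma Ideal.torsionOf_quotient_mk (J : Ideal R) (u : R) :
    Ideal.torsionOf R (R ⧸ J) (Ideal.Quotient.mk J u) = J.colon (Ideal.span {u}) := by
  ext r
  rw [Ideal.mem_torsionOf_iff, Ideal.mem_colon_span_singleton, Algebra.smul_def,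
    Ideal.Quotient.algebraMap_eq, ← map_mul, Ideal.Quotient.eq_zero_iff_mem]

lemma Ideal.nonempty_map_mkQ_sup_span_singleton_equiv (J : Ideal R) (u : R) :
    Nonempty (Submodule.map J.mkQ (J ⊔ Ideal.span {u}) ≃ₗ[R] R ⧸ J.colon (Ideal.span {u})) := by
  rw [Ideal.span, Submodule.map_sup, Submodule.mkQ_map_self, bot_sup_eq, Submodule.map_span,
    Set.image_singleton, ← J.torsionOf_quotient_mk u]
  exact ⟨(Ideal.quotTorsionOfEquivSpanSingleton R _ _).symm⟩

lemma isPrimeFiltration_top : IsPrimeFiltration (⊤ : Ideal R) 0 (fun _ => ⊤) Fin.elim0 :=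
  ⟨rfl, rfl, Fin.elim0, fun i => i.elim0⟩

lemma IsPrimeFiltration.cons {J : Ideal R} {u : R} {r : ℕ} {F : Fin (r + 1) → Ideal R}
    {P : Fin r → Ideal R} (hF : IsPrimeFiltration (J ⊔ Ideal.span {u}) r F P)
    (hP : (J.colon (Ideal.span {u})).IsPrime) :
    IsPrimeFiltration J (r + 1) (Fin.cons J F) (Fin.cons (J.colon (Ideal.span {u})) P) := by
  obtain ⟨hF0, hFlast, hmono, hquot⟩ := hF
  refine ⟨rfl, by rw [← Fin.succ_last, Fin.cons_succ, hFlast], fun i => ?_, fun i => ?_⟩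
  · refine Fin.cases ?_ (fun j => ?_) i
    · simp [hF0]
    · simpa [← Fin.succ_castSucc] using hmono j
  · refine Fin.cases ⟨hP, ?_⟩ (fun j => ?_) i
    · show Nonempty (Submodule.map J.mkQ (F 0) ≃ₗ[R] R ⧸ J.colon (Ideal.span {u}))
      rw [hF0]
      exact J.nonempty_map_mkQ_sup_span_singleton_equiv u
    · rw [← Fin.succ_castSucc]
      exact hquot j

theorem exists_isPrimeFiltration_of_forall_exists_colon_mem [IsNoetherianRing R]
    {C Ps : Set (Ideal R)} (hPs : ∀ P ∈ Ps, P.IsPrime)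
    (hstep : ∀ J ∈ C, J ≠ ⊤ → ∃ u, J ⊔ Ideal.span {u} ∈ C ∧ J.colon (Ideal.span {u}) ∈ Ps)
    {J : Ideal R} (hJ : J ∈ C) :
    ∃ r F P, IsPrimeFiltration J r F P ∧ ∀ i, P i ∈ Ps := by
  induction J using WellFoundedGT.induction with
  | _ J ih =>
    by_cases hJtop : J = ⊤
    · subst hJtop
      exact ⟨0, _, _, isPrimeFiltration_top, fun i => i.elim0⟩
    obtain ⟨u, huC, huPs⟩ := hstep J hJ hJtop
    have hu : u ∉ J := fun hu => (hPs _ huPs).ne_top <|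
      (Ideal.eq_top_iff_one _).mpr (Ideal.mem_colon_span_singleton.mpr (by rwa [one_mul]))
    obtain ⟨r, F, P, hF, hP⟩ :=
      ih _ (left_lt_sup.mpr fun h => hu (h (Ideal.mem_span_singleton_self u))) huC
    exact ⟨r + 1, _, _, hF.cons (hPs _ huPs), Fin.cases huPs hP⟩

end PrimeFiltration

section AssociatedPrimes

variable {R : Type*} [CommRing R] {I P : Ideal R}

lemma Ideal.le_of_mem_associatedPrimes (hP : P ∈ associatedPrimes R (R ⧸ I)) : I ≤ P := by
  simpa [Submodule.annihilator_top, Ideal.annihilator_quotient] using hP.annihilator_le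

variable [IsNoetherianRing R]

lemma Ideal.minimalPrimes_subset_associatedPrimes (I : Ideal R) :
    I.minimalPrimes ⊆ associatedPrimes R (R ⧸ I) := by
  simpa [Ideal.annihilator_quotient] using
    Module.associatedPrimes.minimalPrimes_annihilator_subset_associatedPrimes R (R ⧸ I)

lemma Ideal.mem_of_forall_associatedPrimes {f : R}
    (h : ∀ P ∈ associatedPrimes R (R ⧸ I), ∃ r ∉ P, r * f ∈ I) : f ∈ I := by
  by_contra hf
  obtain ⟨P, hP, hle⟩ := exists_le_isAssociatedPrime_of_isNoetherianRing R
    (Ideal.Quotient.mk I f) (by rwa [ne_eq, Ideal.Quotient.eq_zero_iff_mem])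
  obtain ⟨r, hrP, hr⟩ := h P hP
  refine hrP (hle ?_)
  rwa [Submodule.mem_colon_singleton, Submodule.mem_bot, Algebra.smul_def,
    Ideal.Quotient.algebraMap_eq, ← map_mul, Ideal.Quotient.eq_zero_iff_mem]

lemma Ideal.mem_radical_of_forall_associatedPrimes {x : R}
    (h : ∀ P ∈ associatedPrimes R (R ⧸ I), x ∈ P) : x ∈ I.radical := by
  rw [← Ideal.sInf_minimalPrimes, Submodule.mem_sInf]
  exact fun P hP => h P (I.minimalPrimes_subset_associatedPrimes hP)

lemma Ideal.mem_minimalPrimes_of_mem_associatedPrimes (hP : P ∈ associatedPrimes R (R ⧸ I))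
    (hmin : ∀ Q ∈ associatedPrimes R (R ⧸ I), Q ≤ P → Q = P) : P ∈ I.minimalPrimes := by
  have := hP.isPrime
  obtain ⟨Q, hQ, hQP⟩ := Ideal.exists_minimalPrimes_le (Ideal.le_of_mem_associatedPrimes hP)
  rwa [← hmin Q (I.minimalPrimes_subset_associatedPrimes hQ) hQP]

end AssociatedPrimes

namespace MvPolynomial

section MonomialIdeal

variable {σ : Type*} (K : Type*) [CommRing K]

noncomputable def monomialIdeal (s : Set (σ →₀ ℕ)) : Ideal (MvPolynomial σ K) :=
  Ideal.span ((fun e => monomial e 1) '' s)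

variable {K} {s s' : Set (σ →₀ ℕ)}

lemma mem_monomialIdeal_iff {f : MvPolynomial σ K} :
    f ∈ monomialIdeal K s ↔ ∀ e ∈ f.support, e ∈ upperClosure s := by
  simp [monomialIdeal, mem_ideal_span_monomial_image, mem_upperClosure]

lemma monomial_mem_monomialIdeal_iff [Nontrivial K] {e : σ →₀ ℕ} :
    monomial e (1 : K) ∈ monomialIdeal K s ↔ e ∈ upperClosure s := by
  classical
  simp [mem_monomialIdeal_iff, support_monomial]

lemma monomialIdeal_congr (h : upperClosure s = upperClosure s') :
    monomialIdeal K s = monomialIdeal K s' := by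
  ext f
  simp only [mem_monomialIdeal_iff, h]

lemma monomialIdeal_union :
    monomialIdeal K (s ∪ s') = monomialIdeal K s ⊔ monomialIdeal K s' := by
  simp only [monomialIdeal, Set.image_union, Ideal.span_union]

lemma monomialIdeal_singleton (u : σ →₀ ℕ) :
    monomialIdeal K {u} = Ideal.span {monomial u 1} := by
  simp [monomialIdeal]

lemma span_X_pair_eq_monomialIdeal (i j : σ) :
    Ideal.span {X i, X j} = monomialIdeal K {Finsupp.single i 1, Finsupp.single j 1} := by
  simp [monomialIdeal, Set.image_pair, X]

lemma colon_monomialIdeal (s : Set (σ →₀ ℕ)) (u : σ →₀ ℕ) :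
    (monomialIdeal K s).colon (Ideal.span {monomial u (1 : K)}) =
      monomialIdeal K ((· + u) ⁻¹' upperClosure s) := by
  ext f
  rw [Ideal.mem_colon_span_singleton, mem_monomialIdeal_iff, mem_monomialIdeal_iff]
  constructor
  · intro h e he
    exact subset_upperClosure (h (e + u) (by simpa [mem_support_iff, coeff_mul_monomial] using he))
  · intro h xi hxi
    rw [mem_support_iff, coeff_mul_monomial'] at hxi
    split_ifs at hxi with hu
    · obtain ⟨a, ha, hle⟩ :=
        mem_upperClosure.mp (h (xi - u) (mem_support_iff.mpr (by simpa using hxi)))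
      exact (upperClosure s).upper ((le_tsub_iff_right hu).mp hle) ha
    · exact absurd rfl hxi

lemma IsMonomialIdeal.exists_eq_monomialIdeal {I : Ideal (MvPolynomial σ K)}
    (hI : IsMonomialIdeal I) : ∃ E : Set (σ →₀ ℕ), I = monomialIdeal K E := by
  obtain ⟨G, hG, rfl⟩ := hI
  refine ⟨{e | monomial e (1 : K) ∈ G}, congrArg _ (Set.ext fun g => ⟨fun hg => ?_, ?_⟩)⟩
  · obtain ⟨e, rfl⟩ := hG g hg
    exact ⟨e, hg, rfl⟩
  · rintro ⟨e, he, rfl⟩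
    exact he

lemma X_mem_span_X_pair_iff [Nontrivial K] {i j l : σ} :
    (X l : MvPolynomial σ K) ∈ Ideal.span {X i, X j} ↔ l = i ∨ l = j := by
  classical
  rw [← Set.image_pair, mem_ideal_span_X_image]
  simp [support_X, Finsupp.single_apply, eq_comm]

lemma X_mem_span_X_singleton_iff [Nontrivial K] {i l : σ} :
    (X l : MvPolynomial σ K) ∈ Ideal.span {X i} ↔ l = i := by
  classical
  rw [← Set.image_singleton, mem_ideal_span_X_image]
  simp [support_X, Finsupp.single_apply, eq_comm]

end MonomialIdeal

section Staircase

variable {σ : Type*}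

/-- `t k a` is the least admissible `X k`-degree at `X o`-degree `a`; `t o` plays no role. -/
def stairSet (o : σ) (t : σ → ℕ → ℕ) : Set (σ →₀ ℕ) := {e | ∀ k ≠ o, t k (e o) ≤ e k}

def IsStaircase (o : σ) (t : σ → ℕ → ℕ) : Prop := ∀ k ≠ o, Antitone (t k) ∧ ∃ N, t k N = 0

def lowerStair [DecidableEq σ] (t : σ → ℕ → ℕ) (j : σ) (a : ℕ) : σ → ℕ → ℕ :=
  Function.update t j (Function.update (t j) a (t j a - 1))

/-- The least element of `stairSet o t` of `X o`-degree `a`. -/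
noncomputable def stairCorner [DecidableEq σ] [Finite σ] (o : σ) (t : σ → ℕ → ℕ) (a : ℕ) :
    σ →₀ ℕ :=
  Finsupp.equivFunOnFinite.symm (Function.update (fun k => t k a) o a)

variable {K : Type*} [CommRing K] {o j : σ} {t : σ → ℕ → ℕ} {a : ℕ}

lemma isUpperSet_stairSet (ht : ∀ k ≠ o, Antitone (t k)) : IsUpperSet (stairSet o t) :=
  fun _ _ hle he k hk => (ht k hk (hle o)).trans ((he k hk).trans (hle k))

lemma IsStaircase.exists_lt_of_ne_zero (ht : IsStaircase o t) {k : σ} (hk : k ≠ o) {x : ℕ}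
    (hx : t k x ≠ 0) : ∃ a, t k (a + 1) < t k a := by
  obtain ⟨hanti, N, hN⟩ := ht k hk
  by_contra! h
  have hmono : Monotone (t k) := monotone_nat_of_le_succ h
  have := (hmono (le_max_left x N)).trans ((hanti (le_max_right x N)).trans hN.le)
  omega

lemma IsStaircase.exists_lt_of_monomialIdeal_ne_top (ht : IsStaircase o t)
    (hne : monomialIdeal K (stairSet o t) ≠ ⊤) : ∃ j ≠ o, ∃ a, t j (a + 1) < t j a := by
  by_contra! h
  refine hne ((Ideal.eq_top_iff_one _).mpr ?_)
  rw [← C_1, ← monomial_zero']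
  refine Ideal.subset_span ⟨0, fun k hk => ?_, rfl⟩
  by_contra hk0
  obtain ⟨a, ha⟩ := ht.exists_lt_of_ne_zero hk (x := 0) (by simpa using hk0)
  exact lt_irrefl _ (ha.trans_le (h k hk a))

variable [DecidableEq σ]

lemma lowerStair_apply_self (x : ℕ) :
    lowerStair t j a j x = if x = a then t j a - 1 else t j x := by
  simp [lowerStair, Function.update_apply]

lemma lowerStair_of_ne {k : σ} (hk : k ≠ j) : lowerStair t j a k = t k := by
  simp [lowerStair, hk]

lemma lowerStair_le (k : σ) (x : ℕ) : lowerStair t j a k x ≤ t k x := by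
  rcases eq_or_ne k j with rfl | hk
  · rw [lowerStair_apply_self]
    split_ifs with h <;> [subst h; skip] <;> omega
  · rw [lowerStair_of_ne hk]

lemma antitone_lowerStair_self (hanti : Antitone (t j)) (ha : t j (a + 1) < t j a) :
    Antitone (lowerStair t j a j) := by
  intro x y hxy
  simp only [lowerStair_apply_self]
  have := hanti hxy
  have : a < y → t j y ≤ t j (a + 1) := fun h => hanti h
  have : x < a → t j a ≤ t j x := fun h => hanti h.le
  split_ifs <;> omega

lemma antitone_lowerStair (ht : ∀ k ≠ o, Antitone (t k)) (ha : t j (a + 1) < t j a) :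
    ∀ k ≠ o, Antitone (lowerStair t j a k) := fun k hk => by
  rcases eq_or_ne k j with rfl | hkj
  · exact antitone_lowerStair_self (ht k hk) ha
  · rw [lowerStair_of_ne hkj]
    exact ht k hk

lemma IsStaircase.lowerStair (ht : IsStaircase o t) (ha : t j (a + 1) < t j a) :
    IsStaircase o (lowerStair t j a) := fun k hk =>
  ⟨antitone_lowerStair (fun k hk => (ht k hk).1) ha k hk,
    (ht k hk).2.imp fun N (hN : t k N = 0) => Nat.eq_zero_of_le_zero (hN ▸ lowerStair_le k N)⟩

variable [Finite σ]

lemma stairCorner_apply_self : stairCorner o t a o = a := by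
  simp [stairCorner]

lemma stairCorner_apply_of_ne {k : σ} (hk : k ≠ o) : stairCorner o t a k = t k a := by
  simp [stairCorner, hk]

lemma stairCorner_mem_stairSet : stairCorner o t a ∈ stairSet o t := fun k hk => by
  rw [stairCorner_apply_self, stairCorner_apply_of_ne hk]

lemma mem_stairSet_lowerStair_iff (ht : ∀ k ≠ o, Antitone (t k))
    (ha : t j (a + 1) < t j a) {e : σ →₀ ℕ} :
    e ∈ stairSet o (lowerStair t j a) ↔
      e ∈ stairSet o t ∨ stairCorner o (lowerStair t j a) a ≤ e := by
  constructor
  · intro he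
    by_cases het : e ∈ stairSet o t
    · exact Or.inl het
    right
    obtain ⟨k, hk, hlt⟩ : ∃ k ≠ o, e k < t k (e o) := by
      simpa [stairSet] using het
    have heo : e o = a := by
      have := he k hk
      rcases eq_or_ne k j with rfl | hkj
      · rw [lowerStair_apply_self] at this
        split_ifs at this with h
        · exact h
        · omega
      · rw [lowerStair_of_ne hkj] at this
        omega
    intro i
    by_cases hi : i = o
    · subst hi
      rw [stairCorner_apply_self, heo]
    · rw [stairCorner_apply_of_ne hi]
      exact heo ▸ he i hi
  · rintro (he | he)
    · exact fun k hk => (lowerStair_le k (e o)).trans (he k hk)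
    · exact isUpperSet_stairSet (antitone_lowerStair ht ha) he stairCorner_mem_stairSet

lemma add_stairCorner_mem_stairSet_iff (ht : ∀ k ≠ o, Antitone (t k)) (hj : j ≠ o)
    (ha : t j (a + 1) < t j a) {e : σ →₀ ℕ} :
    e + stairCorner o (lowerStair t j a) a ∈ stairSet o t ↔ 0 < e o ∨ 0 < e j := by
  simp only [stairSet, Set.mem_ofPred_eq, Finsupp.add_apply, stairCorner_apply_self]
  constructor
  · intro h
    by_contra! h0
    have := h j hj
    rw [stairCorner_apply_of_ne hj, lowerStair_apply_self, if_pos rfl, Nat.le_zero.mp h0.1,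
      Nat.le_zero.mp h0.2, zero_add, zero_add] at this
    omega
  · intro h k hk
    rw [stairCorner_apply_of_ne hk]
    have h1 : 0 < e o → t k (e o + a) ≤ t k (a + 1) := fun h => ht k hk (by omega)
    have h2 : t k (a + 1) ≤ t k a := ht k hk (by omega)
    have h3 : e o = 0 → t k (e o + a) = t k a := fun h => by rw [h, zero_add]
    rcases eq_or_ne k j with rfl | hkj
    · rw [lowerStair_apply_self, if_pos rfl]
      omega
    · rw [lowerStair_of_ne hkj]
      omega

lemma monomialIdeal_stairSet_lowerStair (ht : ∀ k ≠ o, Antitone (t k))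
    (ha : t j (a + 1) < t j a) :
    monomialIdeal K (stairSet o (lowerStair t j a)) = monomialIdeal K (stairSet o t) ⊔
      Ideal.span {monomial (stairCorner o (lowerStair t j a) a) 1} := by
  rw [← monomialIdeal_singleton, ← monomialIdeal_union]
  refine monomialIdeal_congr (SetLike.ext fun e => ?_)
  rw [← SetLike.mem_coe, (isUpperSet_stairSet (antitone_lowerStair ht ha)).upperClosure,
    mem_stairSet_lowerStair_iff ht ha, upperClosure_union, UpperSet.mem_inf_iff,
    upperClosure_singleton, UpperSet.mem_Ici_iff, ← SetLike.mem_coe,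
    (isUpperSet_stairSet ht).upperClosure]

lemma colon_monomialIdeal_stairSet (ht : ∀ k ≠ o, Antitone (t k)) (hj : j ≠ o)
    (ha : t j (a + 1) < t j a) :
    (monomialIdeal K (stairSet o t)).colon
        (Ideal.span {monomial (stairCorner o (lowerStair t j a) a) (1 : K)}) =
      Ideal.span {X o, X j} := by
  rw [colon_monomialIdeal, span_X_pair_eq_monomialIdeal]
  refine monomialIdeal_congr (SetLike.ext fun e => ?_)
  rw [(isUpperSet_stairSet ht).upperClosure, ← SetLike.mem_coe,
    ((isUpperSet_stairSet ht).preimage fun _ _ h => add_le_add_left h _).upperClosure,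
    Set.mem_preimage, add_stairCorner_mem_stairSet_iff ht hj ha, mem_upperClosure]
  simp [Finsupp.single_le_iff, Nat.one_le_iff_ne_zero, Nat.pos_iff_ne_zero]

theorem exists_isPrimeFiltration_monomialIdeal_stairSet [IsNoetherianRing K]
    {Ps : Set (Ideal (MvPolynomial σ K))} (hPs : ∀ P ∈ Ps, P.IsPrime)
    (hX : ∀ k ≠ o, Ideal.span {X o, X k} ∈ Ps) (ht : IsStaircase o t) :
    ∃ r F P, IsPrimeFiltration (monomialIdeal K (stairSet o t)) r F P ∧ ∀ i, P i ∈ Ps := by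
  refine exists_isPrimeFiltration_of_forall_exists_colon_mem
    (C := {J | ∃ t, IsStaircase o t ∧ J = monomialIdeal K (stairSet o t)}) hPs ?_ ⟨t, ht, rfl⟩
  rintro _ ⟨t, ht, rfl⟩ hne
  obtain ⟨j, hj, a, ha⟩ := ht.exists_lt_of_monomialIdeal_ne_top hne
  have hanti := fun k hk => (ht k hk).1
  refine ⟨_, ⟨_, ht.lowerStair ha, (monomialIdeal_stairSet_lowerStair hanti ha).symm⟩, ?_⟩
  rw [colon_monomialIdeal_stairSet hanti hj ha]
  exact hX j hj

end Staircase

section StairOf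

variable {σ : Type*} {E : Set (σ →₀ ℕ)} {o : σ}

/-- Note `sInf ∅ = 0`: `stairOf E o` describes `E` only when some `e ∈ E` has `e o = 0`. -/
noncomputable def stairOf (E : Set (σ →₀ ℕ)) (o : σ) : σ → ℕ → ℕ :=
  fun k a => sInf {b | ∃ e ∈ E, e o ≤ a ∧ e k ≤ b}

lemma stairOf_le {e : σ →₀ ℕ} (he : e ∈ E) {k : σ} {a : ℕ} (ha : e o ≤ a) :
    stairOf E o k a ≤ e k :=
  Nat.sInf_le ⟨e, he, ha, le_rfl⟩

lemma exists_le_stairOf (h0 : ∃ e ∈ E, e o = 0) (k : σ) (a : ℕ) :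
    ∃ e ∈ E, e o ≤ a ∧ e k ≤ stairOf E o k a := by
  obtain ⟨e, he, he0⟩ := h0
  exact Nat.sInf_mem (s := {b | ∃ e ∈ E, e o ≤ a ∧ e k ≤ b}) ⟨e k, e, he, by omega, le_rfl⟩

lemma isStaircase_stairOf (h0 : ∃ e ∈ E, e o = 0) (hN : ∃ e ∈ E, ∀ k ≠ o, e k = 0) :
    IsStaircase o (stairOf E o) := by
  obtain ⟨eN, heN, heN0⟩ := hN
  refine fun k hk => ⟨fun a b hab => ?_, eN o, ?_⟩
  · obtain ⟨e, he, hea, hek⟩ := exists_le_stairOf h0 k a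
    exact (stairOf_le he (hea.trans hab)).trans hek
  · exact Nat.eq_zero_of_le_zero ((stairOf_le heN le_rfl).trans (heN0 k hk).le)

lemma mem_stairSet_stairOf_iff (h0 : ∃ e ∈ E, e o = 0) {e : σ →₀ ℕ} :
    e ∈ stairSet o (stairOf E o) ↔ ∀ k ≠ o, ∃ e' ∈ E, e' o ≤ e o ∧ e' k ≤ e k := by
  refine ⟨fun he k hk => ?_, fun he k hk => ?_⟩
  · obtain ⟨e', he', h1, h2⟩ := exists_le_stairOf h0 k (e o)
    exact ⟨e', he', h1, h2.trans (he k hk)⟩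
  · obtain ⟨e', he', h1, h2⟩ := he k hk
    exact (stairOf_le he' h1).trans h2

end StairOf

section SpanXPairPrimes

variable {σ K : Type*} [CommRing K] [Finite σ] [IsNoetherianRing K] {o : σ}
  {I : Ideal (MvPolynomial σ K)} {E : Set (σ →₀ ℕ)}

lemma span_X_pair_mem_minimalPrimes [Nontrivial K]
    (hAss : associatedPrimes _ (MvPolynomial σ K ⧸ I) =
      {P : Ideal (MvPolynomial σ K) | ∃ k ≠ o, P = Ideal.span {X o, X k}})
    {k : σ} (hk : k ≠ o) : Ideal.span {X o, X k} ∈ I.minimalPrimes := by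
  refine Ideal.mem_minimalPrimes_of_mem_associatedPrimes (hAss ▸ ⟨k, hk, rfl⟩) fun Q hQ hQk => ?_
  obtain ⟨l, hl, rfl⟩ := hAss ▸ hQ
  rcases X_mem_span_X_pair_iff.mp (hQk (Ideal.subset_span (Set.mem_insert_of_mem _ rfl))) with
    rfl | rfl
  · exact absurd rfl hl
  · rfl

lemma exists_mem_forall_ne_eq_zero [Nontrivial K]
    (hAss : associatedPrimes _ (MvPolynomial σ K ⧸ monomialIdeal K E) ⊆
      {P : Ideal (MvPolynomial σ K) | ∃ k ≠ o, P = Ideal.span {X o, X k}}) :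
    ∃ e ∈ E, ∀ k ≠ o, e k = 0 := by
  obtain ⟨N, hN⟩ := Ideal.mem_radical_of_forall_associatedPrimes (x := X o) fun P hP => by
    obtain ⟨k, -, rfl⟩ := hAss hP
    exact Ideal.subset_span (Set.mem_insert _ _)
  rw [X_pow_eq_monomial, monomial_mem_monomialIdeal_iff, mem_upperClosure] at hN
  obtain ⟨e, he, hle⟩ := hN
  exact ⟨e, he, fun k hk => Nat.eq_zero_of_le_zero (by simpa [hk.symm] using hle k)⟩

lemma exists_mem_apply_eq_zero [IsDomain K]
    (hAss : associatedPrimes _ (MvPolynomial σ K ⧸ monomialIdeal K E) ⊆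
      {P : Ideal (MvPolynomial σ K) | ∃ k ≠ o, P = Ideal.span {X o, X k}}) :
    ∃ e ∈ E, e o = 0 := by
  classical
  by_contra! h
  have hle : monomialIdeal K E ≤ Ideal.span {X o} := by
    rw [monomialIdeal, Ideal.span_le]
    rintro _ ⟨e, he, rfl⟩
    rw [SetLike.mem_coe, ← Set.image_singleton, mem_ideal_span_X_image]
    simpa [support_monomial] using h e he
  have : (Ideal.span {(X o : MvPolynomial σ K)}).IsPrime :=
    (Ideal.span_singleton_prime (X_ne_zero o)).mpr X_prime
  obtain ⟨Q, hQ, hQo⟩ := Ideal.exists_minimalPrimes_le hle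
  obtain ⟨k, hk, rfl⟩ := hAss ((monomialIdeal K E).minimalPrimes_subset_associatedPrimes hQ)
  exact hk ((X_mem_span_X_singleton_iff (K := K)).mp
    (hQo (Ideal.subset_span (Set.mem_insert_of_mem _ rfl))))

lemma monomial_mem_of_forall_exists_le [Nontrivial K]
    (hAss : associatedPrimes _ (MvPolynomial σ K ⧸ monomialIdeal K E) ⊆
      {P : Ideal (MvPolynomial σ K) | ∃ k ≠ o, P = Ideal.span {X o, X k}})
    {e : σ →₀ ℕ} (he : ∀ k ≠ o, ∃ e' ∈ E, e' o ≤ e o ∧ e' k ≤ e k) :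
    monomial e (1 : K) ∈ monomialIdeal K E := by
  refine Ideal.mem_of_forall_associatedPrimes fun P hP => ?_
  obtain ⟨k, hk, rfl⟩ := hAss hP
  obtain ⟨e', he', h1, h2⟩ := he k hk
  refine ⟨monomial (e' - e) 1, ?_, ?_⟩
  · rw [span_X_pair_eq_monomialIdeal, monomial_mem_monomialIdeal_iff, mem_upperClosure]
    rintro ⟨a, ha, hle⟩
    rcases ha with rfl | rfl
    · simpa [h1] using hle o
    · simpa [h2] using hle k
  · rw [monomial_mul, one_mul, monomial_mem_monomialIdeal_iff, mem_upperClosure]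
    exact ⟨e', he', le_tsub_add⟩

lemma monomialIdeal_eq_stairSet_stairOf [IsDomain K]
    (hAss : associatedPrimes _ (MvPolynomial σ K ⧸ monomialIdeal K E) ⊆
      {P : Ideal (MvPolynomial σ K) | ∃ k ≠ o, P = Ideal.span {X o, X k}}) :
    monomialIdeal K E = monomialIdeal K (stairSet o (stairOf E o)) := by
  have h0 := exists_mem_apply_eq_zero hAss
  have ht := isStaircase_stairOf h0 (exists_mem_forall_ne_eq_zero hAss)
  refine monomialIdeal_congr (SetLike.coe_injective ?_)
  rw [(isUpperSet_stairSet fun k hk => (ht k hk).1).upperClosure]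
  ext e
  rw [SetLike.mem_coe, mem_stairSet_stairOf_iff h0]
  refine ⟨fun he k _ => ?_, fun he => ?_⟩
  · obtain ⟨a, ha, hae⟩ := mem_upperClosure.mp he
    exact ⟨a, ha, hae o, hae k⟩
  · exact monomial_mem_monomialIdeal_iff.mp (monomial_mem_of_forall_exists_le hAss he)

end SpanXPairPrimes

theorem isClean_of_associatedPrimes_eq {σ K : Type*} [CommRing K] [IsDomain K]
    [IsNoetherianRing K] [Finite σ] (o : σ) {I : Ideal (MvPolynomial σ K)}
    (hI : IsMonomialIdeal I)
    (hAss : associatedPrimes _ (MvPolynomial σ K ⧸ I) =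
      {P : Ideal (MvPolynomial σ K) | ∃ k ≠ o, P = Ideal.span {X o, X k}}) :
    IsClean I := by
  classical
  obtain ⟨E, rfl⟩ := hI.exists_eq_monomialIdeal
  obtain ⟨r, F, P, hF, hP⟩ := exists_isPrimeFiltration_monomialIdeal_stairSet
    (fun P hP => hP.1.1) (fun k hk => span_X_pair_mem_minimalPrimes hAss hk)
    (isStaircase_stairOf (exists_mem_apply_eq_zero hAss.le)
      (exists_mem_forall_ne_eq_zero hAss.le))
  exact ⟨r, F, P, monomialIdeal_eq_stairSet_stairOf hAss.le ▸ hF, hP⟩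

end MvPolynomial

/-- If `I ⊆ K[x,y,z,w]` is a monomial ideal with
`Ass(S/I) = {(x,y), (x,z), (x,w)}`, then `S/I` is clean. -/
theorem stmt_8 (I : Ideal S) (hI : IsMonomialIdeal I)
    (hAss : associatedPrimes S (S ⧸ I) =
      {Ideal.span {X 0, X 1}, Ideal.span {X 0, X 2}, Ideal.span {X 0, X 3}}) :
    IsClean I := by
  refine MvPolynomial.isClean_of_associatedPrimes_eq 0 hI (hAss.trans ?_)
  ext P
  simp [Fin.exists_fin_succ]
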